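/- arXiv:2206.15188 — 2 statements merged into one kernel-verified Lean document; each statement's English description precedes it below -/
import Mathlib

section
/- Let M be a 3-connected matroid with a path of 3-separations (X,{z₁},{z₂},{z₃},Y) such that z₁ and z₃ are coguts elements and z₂ is a guts element. Then ⊓(X,Y) ≤ 1, and ⊓(X,Y) = 1 if and only if {z₁,z₂,z₃} is a triad of M. -/
open Set Matroid

namespace PaperFormal

variable {α : Type*} {β : Type*}

/-- The (ℤ-valued) rank of a set in a matroid: the supremum of cardinalities of
independent subsets. -/
noncomputable def rk (M : Matroid α) (X : Set α) : ℤ :=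
  (sSup {n : ℕ | ∃ I, I ⊆ X ∧ M.Indep I ∧ I.ncard = n} : ℕ)

/-- Local connectivity `⊓(X,Y) = r(X) + r(Y) − r(X ∪ Y)`. -/
noncomputable def lconn (M : Matroid α) (X Y : Set α) : ℤ :=
  rk M X + rk M Y - rk M (X ∪ Y)

/-- The connectivity function `λ(X) = r(X) + r(E − X) − r(M)`. -/
noncomputable def lam (M : Matroid α) (X : Set α) : ℤ :=
  rk M X + rk M (M.E \ X) - rk M M.E

/-- A circuit: a minimal dependent set. -/
def IsCircuitP (M : Matroid α) (C : Set α) : Prop :=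
  M.Dep C ∧ ∀ D ⊂ C, M.Indep D

/-- A triangle: a 3-element circuit. -/
def IsTriangleP (M : Matroid α) (T : Set α) : Prop :=
  IsCircuitP M T ∧ T.ncard = 3

/-- A triad: a 3-element cocircuit. -/
def IsTriadP (M : Matroid α) (T : Set α) : Prop :=
  IsCircuitP M✶ T ∧ T.ncard = 3

/-- A `k`-separation: a partition `(X, E − X)` with `λ(X) < k` and both sides of
size at least `k`. -/
def IsKSepP (M : Matroid α) (k : ℕ) (X : Set α) : Prop :=
  X ⊆ M.E ∧ lam M X ≤ (k : ℤ) - 1 ∧ (k : ℤ) ≤ X.ncard ∧ (k : ℤ) ≤ (M.E \ X).ncard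

/-- `M` is 3-connected if it has no `k`-separations for `k < 3`. -/
def ThreeConnectedP (M : Matroid α) : Prop :=
  ∀ k : ℕ, k < 3 → ∀ X : Set α, ¬ IsKSepP M k X

/-- Deletion of a set of elements. -/
def PDelete (M : Matroid α) (D : Set α) : Matroid α := M ↾ (M.E \ D)

/-- Contraction of a set of elements. -/
def PContract (M : Matroid α) (C : Set α) : Matroid α := (PDelete M✶ C)✶

/-- `N` is a minor of `M`. -/
def IsMinorP (N M : Matroid α) : Prop :=
  ∃ C D, Disjoint C D ∧ C ⊆ M.E ∧ D ⊆ M.E ∧ N = PDelete (PContract M C) D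

/-- `M` is (isomorphic to) the uniform matroid `U_{a,b}`. -/
def IsUnifP (a b : ℕ) (M : Matroid α) : Prop :=
  M.E.Finite ∧ M.E.ncard = b ∧ ∀ I ⊆ M.E, (M.Indep I ↔ I.ncard ≤ a)

/-- `M` has a minor isomorphic to `U_{a,b}`. -/
def HasUnifMinorP (M : Matroid α) (a b : ℕ) : Prop :=
  ∃ N, IsMinorP N M ∧ IsUnifP a b N

/-- `M` has a minor isomorphic to `U_{2,5}` or `U_{3,5}`. -/
def HasU25U35MinorP (M : Matroid α) : Prop :=
  HasUnifMinorP M 2 5 ∨ HasUnifMinorP M 3 5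

/-- `M` is fragile with respect to the (isomorphism-closed) property `P` of matroids:
`M` has a minor satisfying `P`, and no element is flexible. -/
def FragileFor (M : Matroid α) (P : Matroid α → Prop) : Prop :=
  (∃ N, IsMinorP N M ∧ P N) ∧
    ∀ e ∈ M.E,
      ¬((∃ N, IsMinorP N (PDelete M {e}) ∧ P N) ∧ (∃ N, IsMinorP N (PContract M {e}) ∧ P N))


lemma ncard_le_of_basis' {M : Matroid α} [M.Finite] {I J X : Set α}
    (hI : M.IsBasis' I X) (hJ : M.Indep J) (hJX : J ⊆ X) : J.ncard ≤ I.ncard := by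
  obtain ⟨J', hJ', hJJ'⟩ := hJ.subset_isBasis'_of_subset hJX
  have h1 : J'.ncard = I.ncard :=
    IsBase.ncard_eq_ncard_of_isBase (isBase_restrict_iff'.2 hJ') (isBase_restrict_iff'.2 hI)
  exact h1 ▸ Set.ncard_le_ncard hJJ' (M.set_finite J' hJ'.indep.subset_ground)

lemma rk_eq_ncard_basis' {M : Matroid α} [M.Finite] {I X : Set α} (hI : M.IsBasis' I X) :
    rk M X = (I.ncard : ℤ) := by
  have hub : ∀ n ∈ {n : ℕ | ∃ J, J ⊆ X ∧ M.Indep J ∧ J.ncard = n}, n ≤ I.ncard := by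
    rintro n ⟨J, hJX, hJ, rfl⟩; exact ncard_le_of_basis' hI hJ hJX
  have hmem : I.ncard ∈ {n : ℕ | ∃ J, J ⊆ X ∧ M.Indep J ∧ J.ncard = n} :=
    ⟨I, hI.subset, hI.indep, rfl⟩
  have h : sSup {n : ℕ | ∃ J, J ⊆ X ∧ M.Indep J ∧ J.ncard = n} = I.ncard :=
    le_antisymm (csSup_le ⟨_, hmem⟩ hub) (le_csSup ⟨I.ncard, hub⟩ hmem)
  rw [rk, h]

lemma rk_indep {M : Matroid α} [M.Finite] {I : Set α} (hI : M.Indep I) :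
    rk M I = (I.ncard : ℤ) :=
  rk_eq_ncard_basis' hI.isBasis_self.isBasis'

lemma le_rk {M : Matroid α} [M.Finite] {I X : Set α} (hI : M.Indep I) (hIX : I ⊆ X) :
    (I.ncard : ℤ) ≤ rk M X := by
  obtain ⟨J, hJ⟩ := M.exists_isBasis' X
  rw [rk_eq_ncard_basis' hJ]
  exact_mod_cast ncard_le_of_basis' hJ hI hIX

lemma rk_le_ncard {M : Matroid α} [M.Finite] {X : Set α} (hX : X.Finite) :
    rk M X ≤ (X.ncard : ℤ) := by
  obtain ⟨J, hJ⟩ := M.exists_isBasis' X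
  rw [rk_eq_ncard_basis' hJ]
  exact_mod_cast Set.ncard_le_ncard hJ.subset hX

lemma indep_of_rk_eq_ncard {M : Matroid α} [M.Finite] {X : Set α} (hXE : X ⊆ M.E)
    (h : rk M X = (X.ncard : ℤ)) : M.Indep X := by
  obtain ⟨J, hJ⟩ := M.exists_isBasis' X
  rw [rk_eq_ncard_basis' hJ] at h
  have hXfin : X.Finite := M.set_finite X hXE
  have : J = X := Set.eq_of_subset_of_ncard_le hJ.subset (by exact_mod_cast h.ge) hXfin
  exact this ▸ hJ.indep

lemma mem_closure_iff_rk {M : Matroid α} [M.Finite] {X : Set α} {e : α} (he : e ∈ M.E) :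
    e ∈ M.closure X ↔ rk M (insert e X) = rk M X := by
  obtain ⟨I, hI⟩ := M.exists_isBasis' X
  rw [← hI.closure_eq_closure]
  constructor
  · intro hecl
    have hIi : M.IsBasis' I (insert e X) := by
      refine ⟨⟨hI.indep, hI.subset.trans (subset_insert _ _)⟩, fun J hJ hIJ f hfJ => ?_⟩
      by_contra hfI
      have hins : M.Indep (insert f I) := hJ.1.subset (insert_subset hfJ hIJ)
      rcases hJ.2 hfJ with rfl | hfX
      · exact (((hI.indep.insert_indep_iff_of_notMem hfI).1 hins).2 hecl)
      · exact hI.insert_not_indep ⟨hfX, hfI⟩ hins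
    rw [rk_eq_ncard_basis' hI, rk_eq_ncard_basis' hIi]
  · intro hrk
    by_contra hecl
    have heI : e ∉ I := fun h => hecl (M.subset_closure I hI.indep.subset_ground h)
    have hins : M.Indep (insert e I) :=
      (hI.indep.insert_indep_iff_of_notMem heI).2 ⟨he, hecl⟩
    have hle : ((insert e I).ncard : ℤ) ≤ rk M (insert e X) :=
      le_rk hins (insert_subset_insert hI.subset)
    rw [Set.ncard_insert_of_notMem heI (M.set_finite I hI.indep.subset_ground),
      hrk, rk_eq_ncard_basis' hI] at hle
    push_cast at hle
    omega

lemma rk_dual_eq {M : Matroid α} [M.Finite] {X : Set α} (hX : X ⊆ M.E) :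
    rk M✶ X = (X.ncard : ℤ) + rk M (M.E \ X) - rk M M.E := by
  obtain ⟨I, hI⟩ := M.exists_isBasis' (M.E \ X)
  obtain ⟨B, hB, hIB⟩ := hI.indep.exists_isBase_superset
  have hXfin : X.Finite := M.set_finite X hX
  have hBfin : B.Finite := M.set_finite B hB.subset_ground
  have hIfin : I.Finite := M.set_finite I hI.indep.subset_ground
  have hBI : I = B ∩ (M.E \ X) :=
    hI.eq_of_subset_indep (hB.indep.inter_right _) (subset_inter hIB hI.subset)
      inter_subset_right
  have hBdiff : B \ X = B ∩ (M.E \ X) := by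
    ext b; exact ⟨fun ⟨h1, h2⟩ => ⟨h1, hB.subset_ground h1, h2⟩, fun ⟨h1, _, h3⟩ => ⟨h1, h3⟩⟩
  -- key cardinality facts
  have h1 : (B ∩ X).ncard + (B \ X).ncard = B.ncard :=
    Set.ncard_inter_add_ncard_diff_eq_ncard B X hBfin
  have h6 : (B \ X).ncard = I.ncard := by rw [hBdiff, ← hBI]
  have h3 : (X ∩ B).ncard + (X \ B).ncard = X.ncard :=
    Set.ncard_inter_add_ncard_diff_eq_ncard X B hXfin
  have hIX : (X ∩ B).ncard = (B ∩ X).ncard := by rw [inter_comm]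
  -- upper bound for the dual rank
  have hub : ∀ n ∈ {n : ℕ | ∃ J, J ⊆ X ∧ M✶.Indep J ∧ J.ncard = n}, n ≤ (X \ B).ncard := by
    rintro n ⟨J, hJX, hJind, rfl⟩
    obtain ⟨hJE, B', hB', hdisj⟩ := dual_indep_iff_exists'.1 hJind
    have hB'fin : B'.Finite := M.set_finite B' hB'.subset_ground
    have hJsub : J ⊆ X \ B' := subset_diff.2 ⟨hJX, hdisj⟩
    have hJle : J.ncard ≤ (X \ B').ncard := Set.ncard_le_ncard hJsub hXfin.diff
    have h2 : (B' ∩ X).ncard + (B' \ X).ncard = B'.ncard :=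
      Set.ncard_inter_add_ncard_diff_eq_ncard B' X hB'fin
    have h4 : (X ∩ B').ncard + (X \ B').ncard = X.ncard :=
      Set.ncard_inter_add_ncard_diff_eq_ncard X B' hXfin
    have hB'diff : B' \ X = B' ∩ (M.E \ X) := by
      ext b; exact ⟨fun ⟨ha, hb⟩ => ⟨ha, hB'.subset_ground ha, hb⟩, fun ⟨ha, _, hb⟩ => ⟨ha, hb⟩⟩
    have h5 : (B' \ X).ncard ≤ I.ncard := by
      rw [hB'diff]
      exact ncard_le_of_basis' hI (hB'.indep.inter_right _) inter_subset_right
    have h7 : B'.ncard = B.ncard := hB'.ncard_eq_ncard_of_isBase hB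
    have hIX' : (X ∩ B').ncard = (B' ∩ X).ncard := by rw [inter_comm]
    omega
  have hmem : (X \ B).ncard ∈ {n : ℕ | ∃ J, J ⊆ X ∧ M✶.Indep J ∧ J.ncard = n} :=
    ⟨X \ B, diff_subset, dual_indep_iff_exists'.2
      ⟨diff_subset.trans hX, B, hB, disjoint_sdiff_left⟩, rfl⟩
  have hsup : sSup {n : ℕ | ∃ J, J ⊆ X ∧ M✶.Indep J ∧ J.ncard = n} = (X \ B).ncard :=
    le_antisymm (csSup_le ⟨_, hmem⟩ hub) (le_csSup ⟨_, hub⟩ hmem)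
  have hrkE : rk M M.E = (B.ncard : ℤ) := rk_eq_ncard_basis' hB.isBasis_ground.isBasis'
  have hrkD : rk M (M.E \ X) = (I.ncard : ℤ) := rk_eq_ncard_basis' hI
  rw [rk, hsup, hrkE, hrkD]
  omega

lemma mem_dual_closure_iff' {M : Matroid α} [M.Finite] {A : Set α} {e : α}
    (hA : A ⊆ M.E) (he : e ∈ M.E) (heA : e ∉ A) :
    e ∈ M✶.closure A ↔ rk M (M.E \ insert e A) + 1 = rk M (M.E \ A) := by
  rw [mem_closure_iff_rk (M := M✶) (show e ∈ M✶.E from he),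
    rk_dual_eq (M := M) hA, rk_dual_eq (M := M) (insert_subset he hA),
    Set.ncard_insert_of_notMem heA (M.ground_finite.subset hA)]
  constructor <;> intro h <;> push_cast at h ⊢ <;> omega

lemma coindep_pair {M : Matroid α} [M.Finite] (hM : ThreeConnectedP M)
    (hE : 4 ≤ M.E.ncard) {e f : α} (he : e ∈ M.E) (hf : f ∈ M.E) (hef : e ≠ f) :
    M✶.Indep {e, f} := by
  by_contra hno
  have hpair : ({e, f} : Set α) ⊆ M.E := by
    rintro x (rfl | rfl); exacts [he, (by simpa using hf)]
  have hcard : ({e, f} : Set α).ncard = 2 := Set.ncard_pair hef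
  have hfin : ({e, f} : Set α).Finite := M.set_finite _ hpair
  have hrk2 : rk M✶ {e, f} ≤ 1 := by
    have hle : rk M✶ {e, f} ≤ 2 := by
      have := rk_le_ncard (M := M✶) hfin; rwa [hcard] at this
    by_contra hgt
    push_neg at hgt
    have h2 : rk M✶ {e, f} = (({e, f} : Set α).ncard : ℤ) := by rw [hcard]; omega
    exact hno (indep_of_rk_eq_ncard (show ({e,f} : Set α) ⊆ M✶.E from hpair) h2)
  have hdual := rk_dual_eq (M := M) hpair
  have hEfin := M.ground_finite
  refine hM 2 (by norm_num) {e, f} ⟨hpair, ?_, ?_, ?_⟩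
  · have h1 : rk M {e, f} ≤ 2 := by
      have := rk_le_ncard (M := M) hfin; rwa [hcard] at this
    rw [hcard] at hdual
    unfold lam
    push_cast at hdual ⊢
    omega
  · simp [hcard]
  · have := Set.ncard_le_ncard_diff_add_ncard M.E {e, f} hfin
    rw [hcard] at this
    push_cast
    omega

/-- If `(X,{z₁},{z₂},{z₃},Y)` is a path of 3-separations in a
3-connected matroid `M` with `z₁, z₃` coguts elements and `z₂` a guts element, then
`⊓(X,Y) ≤ 1`, with equality iff `{z₁,z₂,z₃}` is a triad of `M`. -/
theorem stmt4 (M : Matroid α) [M.Finite] (hM : ThreeConnectedP M)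
    (X Y : Set α) (z₁ z₂ z₃ : α)
    (hXne : X.Nonempty) (hYne : Y.Nonempty)
    (hz12 : z₁ ≠ z₂) (hz13 : z₁ ≠ z₃) (hz23 : z₂ ≠ z₃)
    (hXz : Disjoint X {z₁, z₂, z₃}) (hYz : Disjoint Y {z₁, z₂, z₃})
    (hXY : Disjoint X Y)
    (hU : X ∪ {z₁, z₂, z₃} ∪ Y = M.E)
    (h1 : lam M X = 2) (h2 : lam M (X ∪ {z₁}) = 2)
    (h3 : lam M (X ∪ {z₁, z₂}) = 2) (h4 : lam M (X ∪ {z₁, z₂, z₃}) = 2)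
    (hz₁cog : z₁ ∈ M✶.closure X ∧ z₁ ∈ M✶.closure ({z₂, z₃} ∪ Y))
    (hz₂guts : z₂ ∈ M.closure (X ∪ {z₁}) ∧ z₂ ∈ M.closure ({z₃} ∪ Y))
    (hz₃cog : z₃ ∈ M✶.closure (X ∪ {z₁, z₂}) ∧ z₃ ∈ M✶.closure Y) :
    lconn M X Y ≤ 1 ∧ (lconn M X Y = 1 ↔ IsTriadP M {z₁, z₂, z₃}) := by
  clear h1 h2 h3
  -- memberships
  have hz1E : z₁ ∈ M.E := by rw [← hU]; simp
  have hz2E : z₂ ∈ M.E := by rw [← hU]; simp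
  have hz3E : z₃ ∈ M.E := by rw [← hU]; simp
  have hXE : X ⊆ M.E := fun a ha => by rw [← hU]; exact Or.inl (Or.inl ha)
  have hYE : Y ⊆ M.E := fun a ha => by rw [← hU]; exact Or.inr ha
  -- pointwise disjointness facts
  have hXz' : ∀ a ∈ X, ¬(a = z₁ ∨ a = z₂ ∨ a = z₃) := fun a ha => by
    simpa using Set.disjoint_left.mp hXz ha
  have hYz' : ∀ a ∈ Y, ¬(a = z₁ ∨ a = z₂ ∨ a = z₃) := fun a ha => by
    simpa using Set.disjoint_left.mp hYz ha
  have hXY' : ∀ a ∈ X, a ∉ Y := fun a ha => Set.disjoint_left.mp hXY ha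
  have hz1Y : z₁ ∉ Y := fun h => hYz' z₁ h (Or.inl rfl)
  have hz3Y : z₃ ∉ Y := fun h => hYz' z₃ h (Or.inr (Or.inr rfl))
  -- set identities
  have I1 : M.E \ ({z₂, z₃} ∪ Y) = X ∪ {z₁} := by
    ext a
    simp only [← hU, mem_diff, mem_union, mem_insert_iff, mem_singleton_iff]
    constructor
    · rintro ⟨(h | (h0 | h0 | h0)) | h0, hn⟩
      exacts [Or.inl h, Or.inr h0, absurd (Or.inl (Or.inl h0)) hn,
        absurd (Or.inl (Or.inr h0)) hn, absurd (Or.inr h0) hn]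
    · rintro (h | h0)
      · exact ⟨Or.inl (Or.inl h), fun hc => by
          rcases hc with (h0 | h0) | h0
          exacts [hXz' a h (Or.inr (Or.inl h0)), hXz' a h (Or.inr (Or.inr h0)), hXY' a h h0]⟩
      · exact ⟨Or.inl (Or.inr (Or.inl h0)), fun hc => by
          rcases hc with (hc | hc) | hc
          exacts [hz12 (h0.symm.trans hc), hz13 (h0.symm.trans hc), hz1Y (h0 ▸ hc)]⟩
  have I2 : M.E \ insert z₁ ({z₂, z₃} ∪ Y) = X := by
    ext a
    simp only [← hU, mem_diff, mem_union, mem_insert_iff, mem_singleton_iff]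
    constructor
    · rintro ⟨(h | (h0 | h0 | h0)) | h0, hn⟩
      exacts [h, absurd (Or.inl h0) hn, absurd (Or.inr (Or.inl (Or.inl h0))) hn,
        absurd (Or.inr (Or.inl (Or.inr h0))) hn, absurd (Or.inr (Or.inr h0)) hn]
    · intro h
      refine ⟨Or.inl (Or.inl h), ?_⟩
      rintro (h0 | (h0 | h0) | h0)
      exacts [hXz' a h (Or.inl h0), hXz' a h (Or.inr (Or.inl h0)),
        hXz' a h (Or.inr (Or.inr h0)), hXY' a h h0]
  have I3 : M.E \ Y = X ∪ {z₁, z₂, z₃} := by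
    ext a
    simp only [← hU, mem_diff, mem_union, mem_insert_iff, mem_singleton_iff]
    constructor
    · rintro ⟨(h | h0) | h0, hn⟩
      exacts [Or.inl h, Or.inr h0, absurd h0 hn]
    · rintro (h | h0)
      · exact ⟨Or.inl (Or.inl h), hXY' a h⟩
      · exact ⟨Or.inl (Or.inr h0), fun hc => hYz' a hc h0⟩
  have I4 : M.E \ insert z₃ Y = X ∪ {z₁, z₂} := by
    ext a
    simp only [← hU, mem_diff, mem_union, mem_insert_iff, mem_singleton_iff]
    constructor
    · rintro ⟨(h | (h0 | h0 | h0)) | h0, hn⟩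
      exacts [Or.inl h, Or.inr (Or.inl h0), Or.inr (Or.inr h0),
        absurd (Or.inl h0) hn, absurd (Or.inr h0) hn]
    · rintro (h | h0 | h0)
      · exact ⟨Or.inl (Or.inl h), fun hc => by
          rcases hc with h0 | h0
          exacts [hXz' a h (Or.inr (Or.inr h0)), hXY' a h h0]⟩
      · exact ⟨Or.inl (Or.inr (Or.inl h0)), fun hc => by
          rcases hc with hc | hc
          exacts [hz13 (h0.symm.trans hc), hz1Y (h0 ▸ hc)]⟩
      · exact ⟨Or.inl (Or.inr (Or.inr (Or.inl h0))), fun hc => by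
          rcases hc with hc | hc
          exacts [hz23 (h0.symm.trans hc), hYz' a hc (Or.inr (Or.inl h0))]⟩
  have I5 : M.E \ (X ∪ {z₁, z₂, z₃}) = Y := by
    ext a
    simp only [← hU, mem_diff, mem_union, mem_insert_iff, mem_singleton_iff]
    constructor
    · rintro ⟨(h | h0) | h0, hn⟩
      exacts [absurd (Or.inl h) hn, absurd (Or.inr h0) hn, h0]
    · intro h
      exact ⟨Or.inr h, fun hc => by
        rcases hc with hc | hc
        exacts [hXY' a hc h, hYz' a h hc]⟩
  have I6 : M.E \ {z₁, z₂, z₃} = X ∪ Y := by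
    ext a
    simp only [← hU, mem_diff, mem_union, mem_insert_iff, mem_singleton_iff]
    constructor
    · rintro ⟨(h | h0) | h0, hn⟩
      exacts [Or.inl h, absurd h0 hn, Or.inr h0]
    · rintro (h | h)
      exacts [⟨Or.inl (Or.inl h), hXz' a h⟩, ⟨Or.inr h, hYz' a h⟩]
  have I7 : insert z₂ (X ∪ {z₁}) = X ∪ {z₁, z₂} := by
    ext a
    simp only [mem_union, mem_insert_iff, mem_singleton_iff]
    constructor
    · rintro (h0 | h | h0)
      exacts [Or.inr (Or.inr h0), Or.inl h, Or.inr (Or.inl h0)]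
    · rintro (h | h0 | h0)
      exacts [Or.inr (Or.inl h), Or.inr (Or.inr h0), Or.inl h0]
  -- cardinalities
  have f3 : ({z₂, z₃} : Set α).Finite := (Set.finite_singleton z₃).insert z₂
  have c2 : ({z₂, z₃} : Set α).ncard = 2 := Set.ncard_pair hz23
  have hz1n : z₁ ∉ ({z₂, z₃} : Set α) := by simp [hz12, hz13]
  have c3 : ({z₁, z₂, z₃} : Set α).ncard = 3 := by
    rw [show ({z₁, z₂, z₃} : Set α) = insert z₁ {z₂, z₃} from rfl,
      Set.ncard_insert_of_notMem hz1n f3, c2]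
  have fZ : ({z₁, z₂, z₃} : Set α).Finite := f3.insert z₁
  obtain ⟨x, hx⟩ := hXne
  have hxZ : x ∉ ({z₁, z₂, z₃} : Set α) := by simpa using hXz' x hx
  have hsub4 : ({x, z₁, z₂, z₃} : Set α) ⊆ M.E := by
    rw [show ({x, z₁, z₂, z₃} : Set α) = insert x {z₁, z₂, z₃} from rfl]
    refine insert_subset (hXE hx) ?_
    rintro b hb
    simp only [mem_insert_iff, mem_singleton_iff] at hb
    rcases hb with rfl | rfl | rfl
    exacts [hz1E, hz2E, hz3E]
  have c4 : ({x, z₁, z₂, z₃} : Set α).ncard = 4 := by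
    rw [show ({x, z₁, z₂, z₃} : Set α) = insert x {z₁, z₂, z₃} from rfl,
      Set.ncard_insert_of_notMem hxZ fZ, c3]
  have hE4 : 4 ≤ M.E.ncard := c4 ▸ Set.ncard_le_ncard hsub4 M.ground_finite
  have hZE : ({z₁, z₂, z₃} : Set α) ⊆ M.E := by
    rintro b hb
    simp only [mem_insert_iff, mem_singleton_iff] at hb
    rcases hb with rfl | rfl | rfl
    exacts [hz1E, hz2E, hz3E]
  -- coindependent pairs
  have p12 : M✶.Indep {z₁, z₂} := coindep_pair hM hE4 hz1E hz2E hz12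
  have p13 : M✶.Indep {z₁, z₃} := coindep_pair hM hE4 hz1E hz3E hz13
  have p23 : M✶.Indep {z₂, z₃} := coindep_pair hM hE4 hz2E hz3E hz23
  -- the rank equations
  have hA1sub : ({z₂, z₃} : Set α) ∪ Y ⊆ M.E :=
    union_subset (by rintro b hb; simp only [mem_insert_iff, mem_singleton_iff] at hb
                     rcases hb with rfl | rfl; exacts [hz2E, hz3E]) hYE
  have hz1A : z₁ ∉ ({z₂, z₃} : Set α) ∪ Y := by
    rintro (hb | hb); exacts [hz1n hb, hz1Y hb]
  have hc1 := (mem_dual_closure_iff' hA1sub hz1E hz1A).1 hz₁cog.2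
  rw [I2, I1] at hc1
  have hc2 := (mem_closure_iff_rk hz2E).1 hz₂guts.1
  rw [I7] at hc2
  have hc3 := (mem_dual_closure_iff' hYE hz3E hz3Y).1 hz₃cog.2
  rw [I4, I3] at hc3
  simp only [lam] at h4
  rw [I5] at h4
  have hrE : rk M M.E = rk M X + rk M Y := by linarith
  have hdZ := rk_dual_eq (M := M) hZE
  rw [I6, c3] at hdZ
  push_cast at hdZ
  have ht2 : (2 : ℤ) ≤ rk M✶ {z₁, z₂, z₃} := by
    have hss : ({z₁, z₂} : Set α) ⊆ {z₁, z₂, z₃} := by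
      rintro b hb; simp only [mem_insert_iff, mem_singleton_iff] at hb ⊢; tauto
    have := le_rk (M := M✶) p12 hss
    rw [Set.ncard_pair hz12] at this
    exact_mod_cast this
  have ht3 : rk M✶ {z₁, z₂, z₃} ≤ 3 := by
    have := rk_le_ncard (M := M✶) fZ
    rw [c3] at this
    exact_mod_cast this
  have hlconn : lconn M X Y = 3 - rk M✶ {z₁, z₂, z₃} := by
    simp only [lconn]; linarith
  refine ⟨by linarith, ?_, ?_⟩
  · -- lconn = 1 → triad
    intro h1'
    have ht : rk M✶ {z₁, z₂, z₃} = 2 := by linarith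
    have hdep : M✶.Dep {z₁, z₂, z₃} := by
      rw [dep_iff]
      refine ⟨fun hind => ?_, hZE⟩
      have := rk_indep (M := M✶) hind
      rw [c3, ht] at this
      norm_num at this
    refine ⟨⟨hdep, ?_⟩, c3⟩
    intro D hD
    have hmiss : z₁ ∉ D ∨ z₂ ∉ D ∨ z₃ ∉ D := by
      by_contra hcon; push_neg at hcon
      obtain ⟨m1, m2, m3⟩ := hcon
      refine hD.ne (Subset.antisymm hD.subset ?_)
      rintro b hb
      simp only [mem_insert_iff, mem_singleton_iff] at hb
      rcases hb with rfl | rfl | rfl <;> assumption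
    rcases hmiss with hm | hm | hm
    · refine p23.subset fun b hb => ?_
      have hb2 := hD.subset hb
      simp only [mem_insert_iff, mem_singleton_iff] at hb2 ⊢
      rcases hb2 with rfl | rfl | rfl
      exacts [absurd hb hm, Or.inl rfl, Or.inr rfl]
    · refine p13.subset fun b hb => ?_
      have hb2 := hD.subset hb
      simp only [mem_insert_iff, mem_singleton_iff] at hb2 ⊢
      rcases hb2 with rfl | rfl | rfl
      exacts [Or.inl rfl, absurd hb hm, Or.inr rfl]
    · refine p12.subset fun b hb => ?_
      have hb2 := hD.subset hb
      simp only [mem_insert_iff, mem_singleton_iff] at hb2 ⊢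
      rcases hb2 with rfl | rfl | rfl
      exacts [Or.inl rfl, Or.inr rfl, absurd hb hm]
  · -- triad → lconn = 1
    rintro ⟨⟨hdep, -⟩, -⟩
    have hni : ¬ M✶.Indep {z₁, z₂, z₃} := (dep_iff.1 hdep).1
    have hne3 : rk M✶ {z₁, z₂, z₃} ≠ 3 := fun h => hni
      (indep_of_rk_eq_ncard (show ({z₁, z₂, z₃} : Set α) ⊆ M✶.E from hZE)
        (by rw [c3]; exact_mod_cast h))
    have ht : rk M✶ {z₁, z₂, z₃} = 2 := by omega
    linarith

end PaperFormal
end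

section
/- Let M be a 3-connected matroid and let L be a segment of M with |L| ≥ 4 (i.e., a set of at least 4 elements any 3 of which form a circuit). If ℓ ∈ L, then M∖ℓ is 3-connected. -/
open Set Matroid

namespace PaperFormal

variable {α : Type*} {β : Type*}

lemma rk_mono (M : Matroid α) [M.Finite] {X Y : Set α} (h : X ⊆ Y) : rk M X ≤ rk M Y := by
  obtain ⟨I, hI⟩ := M.exists_isBasis' X
  obtain ⟨J, hJ, hIJ⟩ := hI.indep.subset_isBasis'_of_subset (hI.subset.trans h)
  rw [rk_eq_ncard_basis' hI, rk_eq_ncard_basis' hJ]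
  exact_mod_cast Set.ncard_le_ncard hIJ (M.set_finite J hJ.indep.subset_ground)

lemma rk_insert_of_mem_closure (M : Matroid α) [M.Finite] {X : Set α} {e : α}
    (hX : X ⊆ M.E) (he : e ∈ M.closure X) : rk M (insert e X) = rk M X := by
  obtain ⟨I, hI⟩ := M.exists_isBasis X hX
  have hIc : M.IsBasis I (M.closure X) := hI.isBasis_closure_right
  have h2 : M.IsBasis I (insert e X) :=
    hIc.isBasis_subset (hI.subset.trans (subset_insert _ _))
      (insert_subset he (M.subset_closure X hX))
  rw [rk_eq_ncard_basis' h2.isBasis', rk_eq_ncard_basis' hI.isBasis']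

lemma rk_restrict (M : Matroid α) (R X : Set α) : rk (M ↾ R) X = rk M (X ∩ R) := by
  unfold rk
  congr 2
  ext n
  constructor
  · rintro ⟨I, hIX, hind, rfl⟩
    rw [restrict_indep_iff] at hind
    exact ⟨I, subset_inter hIX hind.2, hind.1, rfl⟩
  · rintro ⟨I, hIX, hind, rfl⟩
    exact ⟨I, hIX.trans inter_subset_left,
      restrict_indep_iff.mpr ⟨hind, hIX.trans inter_subset_right⟩, rfl⟩

lemma ksep_compl {M : Matroid α} {k : ℕ} {X : Set α} (h : IsKSepP M k X) :
    IsKSepP M k (M.E \ X) := by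
  obtain ⟨h1, h2, h3, h4⟩ := h
  have hc : M.E \ (M.E \ X) = X := diff_diff_cancel_left h1
  refine ⟨diff_subset, ?_, h4, by rwa [hc]⟩
  unfold lam at h2 ⊢
  rw [hc]; linarith

lemma transfer (M : Matroid α) [M.Finite] {L : Set α} (hL : L ⊆ M.E)
    (hseg : ∀ T ⊆ L, T.ncard = 3 → IsCircuitP M T)
    {l : α} (hl : l ∈ L) {k : ℕ} {X : Set α}
    (hsep : IsKSepP (PDelete M {l}) k X)
    {a b : α} (ha : a ∈ X ∩ (L \ {l})) (hb : b ∈ X ∩ (L \ {l})) (hab : a ≠ b) :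
    IsKSepP M k (insert l X) := by
  obtain ⟨hXE, hlam, hcX, hcY⟩ := hsep
  have hlE : l ∈ M.E := hL hl
  have hE' : (PDelete M {l}).E = M.E \ {l} := rfl
  rw [hE'] at hXE hcY
  have hXE' : X ⊆ M.E := hXE.trans diff_subset
  have hal : a ≠ l := ha.2.2
  have hbl : b ≠ l := hb.2.2
  -- the triangle {a, b, l}
  have hT3 : ({a, b, l} : Set α).ncard = 3 := by
    rw [Set.ncard_insert_of_notMem (by simp [hab, hal]),
      Set.ncard_insert_of_notMem (by simp [hbl]), Set.ncard_singleton]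
  have hTL : ({a, b, l} : Set α) ⊆ L :=
    insert_subset ha.2.1 (insert_subset hb.2.1 (singleton_subset_iff.mpr hl))
  have hcirc := hseg _ hTL hT3
  have hlT : l ∈ ({a, b, l} : Set α) := by simp
  have hIind : M.Indep (({a, b, l} : Set α) \ {l}) :=
    hcirc.2 _ (Set.sdiff_singleton_ssubset.mpr hlT)
  have hd : ({a, b, l} : Set α) \ {l} = {a, b} := by
    ext x
    simp only [mem_diff, mem_insert_iff, mem_singleton_iff]
    constructor
    · rintro ⟨h1, h2⟩; tauto
    · rintro (rfl | rfl)
      exacts [⟨Or.inl rfl, hal⟩, ⟨Or.inr (Or.inl rfl), hbl⟩]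
  have hlmem : l ∈ M.closure ({a, b} : Set α) := by
    rw [← hd]
    rw [hIind.mem_closure_iff_of_notMem (by simp)]
    rw [Set.insert_diff_singleton, insert_eq_of_mem hlT]
    exact hcirc.1
  have habX : ({a, b} : Set α) ⊆ X := insert_subset ha.1 (singleton_subset_iff.mpr hb.1)
  have hlclX : l ∈ M.closure X := M.closure_subset_closure habX hlmem
  have hrins : rk M (insert l X) = rk M X := rk_insert_of_mem_closure M hXE' hlclX
  have habE' : ({a, b} : Set α) ⊆ M.E \ {l} :=
    insert_subset ⟨hL ha.2.1, hal⟩ (singleton_subset_iff.mpr ⟨hL hb.2.1, hbl⟩)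
  have hlclE' : l ∈ M.closure (M.E \ {l}) := M.closure_subset_closure habE' hlmem
  have hEeq : insert l (M.E \ {l}) = M.E := by
    rw [Set.insert_diff_singleton, insert_eq_of_mem hlE]
  have hrE : rk M M.E = rk M (M.E \ {l}) := by
    have h := rk_insert_of_mem_closure M diff_subset hlclE'
    rwa [hEeq] at h
  have hres : ∀ Z : Set α, Z ⊆ M.E \ {l} → rk (PDelete M {l}) Z = rk M Z := by
    intro Z hZ
    rw [PDelete, rk_restrict, inter_eq_self_of_subset_left hZ]
  have hdiff : M.E \ insert l X = (M.E \ {l}) \ X := by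
    rw [diff_diff, singleton_union]
  simp only [lam, hE'] at hlam
  rw [hres X hXE, hres _ diff_subset, hres _ (Subset.refl _)] at hlam
  have hfinl : (insert l X).Finite := M.ground_finite.subset (insert_subset hlE hXE')
  refine ⟨insert_subset hlE hXE', ?_, ?_, ?_⟩
  · unfold lam
    rw [hrins, hdiff, hrE]
    linarith
  · have h1 : X.ncard ≤ (insert l X).ncard :=
      Set.ncard_le_ncard (subset_insert _ _) hfinl
    have := hcX; push_cast at this ⊢; omega
  · rw [hdiff]; exact hcY

/-- If `L` is a segment of a 3-connected matroid `M` with `|L| ≥ 4`,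
then deleting any element of `L` leaves a 3-connected matroid. -/
theorem stmt9 (M : Matroid α) [M.Finite] (hM : ThreeConnectedP M)
    (L : Set α) (hL : L ⊆ M.E) (hcard : 4 ≤ L.ncard)
    (hseg : ∀ T ⊆ L, T.ncard = 3 → IsCircuitP M T)
    (l : α) (hl : l ∈ L) :
    ThreeConnectedP (PDelete M {l}) := by
  intro k hk X hX
  have hlE : l ∈ M.E := hL hl
  have hLfin : L.Finite := M.ground_finite.subset hL
  have hL'3 : 3 ≤ (L \ {l}).ncard := by
    have h := Set.ncard_diff_singleton_add_one hl hLfin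
    omega
  have hL'sub : L \ {l} ⊆ M.E \ {l} := fun x hx => ⟨hL hx.1, hx.2⟩
  have hXE : X ⊆ M.E \ {l} := hX.1
  have hsplit : L \ {l} ⊆ (X ∩ (L \ {l})) ∪ (((M.E \ {l}) \ X) ∩ (L \ {l})) := by
    intro x hx
    by_cases hxX : x ∈ X
    · exact Or.inl ⟨hxX, hx⟩
    · exact Or.inr ⟨⟨hL'sub hx, hxX⟩, hx⟩
  have hfin1 : (X ∩ (L \ {l})).Finite := hLfin.subset (inter_subset_right.trans diff_subset)
  have hfin2 : (((M.E \ {l}) \ X) ∩ (L \ {l})).Finite :=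
    hLfin.subset (inter_subset_right.trans diff_subset)
  have hbig : 1 < (X ∩ (L \ {l})).ncard ∨ 1 < (((M.E \ {l}) \ X) ∩ (L \ {l})).ncard := by
    by_contra hcon
    push_neg at hcon
    have h1 := Set.ncard_le_ncard hsplit (hfin1.union hfin2)
    have h2 := Set.ncard_union_le (X ∩ (L \ {l})) (((M.E \ {l}) \ X) ∩ (L \ {l}))
    omega
  rcases hbig with hbig | hbig
  · obtain ⟨a, ha, b, hb, hab⟩ := (Set.one_lt_ncard hfin1).mp hbig
    exact hM k hk _ (transfer M hL hseg hl hX ha hb hab)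
  · obtain ⟨a, ha, b, hb, hab⟩ := (Set.one_lt_ncard hfin2).mp hbig
    exact hM k hk _ (transfer M hL hseg hl (ksep_compl hX) ha hb hab)


end PaperFormal
end
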